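/- arXiv:2104.07599 — 2 statements merged into one kernel-verified Lean document; each statement's English description precedes it below -/
import Mathlib

section
/- For the rectangular partition a^b (b rows of length a), the Garsia–Remmel q-rook number is R_k(a^b) = q^{(a−k)(b−k)} · [a]_k [b]_k / [k]!, where [a]_k = [a][a−1]···[a−k+1]. -/
open Finset

noncomputable section
open scoped Classical

variable {K : Type*} [Field K]

/-- The `q`-integer `[x] = (1 - q^x)/(1 - q)` for an integer `x`. -/
def qInt (q : K) (x : ℤ) : K := (1 - q ^ x) / (1 - q)

/-- The falling `q`-factorial `[x]_j = [x][x-1]⋯[x-j+1]`. -/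
def qFall (q : K) (x : ℤ) (j : ℕ) : K := ∏ t ∈ Finset.range j, qInt q (x - t)

/-- The `q`-factorial `[n]! = [n]_n`. -/
def qFact (q : K) (n : ℕ) : K := qFall q (n : ℤ) n

/-- The Gaussian (`q`-)binomial coefficient `[a]!/([b]! [a-b]!)`. -/
def qBinom (q : K) (a b : ℕ) : K := qFact q a / (qFact q b * qFact q (a - b))

/-- The cells of the Ferrers board of `lam` (1-indexed rows `1,…,ℓ`):
cell `(i,j)` with `1 ≤ i ≤ ℓ` and `1 ≤ j ≤ lam i`. -/
def board (lam : ℕ → ℕ) (ℓ : ℕ) : Finset (ℕ × ℕ) :=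
  ((Finset.Icc 1 ℓ) ×ˢ (Finset.Icc 1 ((Finset.Icc 1 ℓ).sup lam))).filter
    (fun c => c.2 ≤ lam c.1)

/-- Placements of `k` non-attacking rooks on the Ferrers board of `lam`. -/
def placements (lam : ℕ → ℕ) (ℓ k : ℕ) : Finset (Finset (ℕ × ℕ)) :=
  (board lam ℓ).powerset.filter
    (fun p => p.card = k ∧ ∀ a ∈ p, ∀ b ∈ p, a ≠ b → a.1 ≠ b.1 ∧ a.2 ≠ b.2)

/-- The Garsia–Remmel inversion statistic of a rook placement `p`: the number of
cells of the board that are not occupied by a rook and not directly west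
(same row, with a rook strictly to the east) or north (same column, with a rook
strictly to the south) of a rook. -/
def rInv (lam : ℕ → ℕ) (ℓ : ℕ) (p : Finset (ℕ × ℕ)) : ℕ :=
  ((board lam ℓ).filter (fun c => c ∉ p ∧
      (∀ r ∈ p, r.1 = c.1 → r.2 < c.2) ∧
      (∀ r ∈ p, r.2 = c.2 → r.1 < c.1))).card

/-- The Garsia–Remmel `q`-rook number `R_k(λ) = ∑_p q^{inv(p)}`. -/
def qRook (q : K) (lam : ℕ → ℕ) (ℓ k : ℕ) : K :=
  ∑ p ∈ placements lam ℓ k, q ^ rInv lam ℓ p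

/-- The size `|λ| = λ_1 + ⋯ + λ_ℓ`. -/
def pSize (lam : ℕ → ℕ) (ℓ : ℕ) : ℕ := ∑ i ∈ Finset.Icc 1 ℓ, lam i

/-- The `q`-hit numbers `H_k^{m,n}(λ)` of `λ ⊆ n×m`, defined from the `q`-rook
numbers by the change of basis
`H_k^{m,n}(λ) = (q^{C(k,2)-|λ|}/[m-n]!) ∑_{i=k}^{n} R_i(λ) [m-i]! qbinom(i,k) (-1)^{i+k} q^{mi-C(i,2)}`. -/
def qHit (q : K) (m n : ℕ) (lam : ℕ → ℕ) (ℓ k : ℕ) : K :=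
  (q ^ ((k.choose 2 : ℤ) - (pSize lam ℓ : ℤ)) / qFact q (m - n)) *
    ∑ i ∈ Finset.Icc k n, qRook q lam ℓ i * qFact q (m - i) * qBinom q i k *
      (-1 : K) ^ (i + k) * q ^ ((m : ℤ) * (i : ℤ) - (i.choose 2 : ℤ))

/-- `lam : ℕ → ℕ` is a partition with exactly `ℓ` (positive) parts `lam 1 ≥ ⋯ ≥ lam ℓ ≥ 1`. -/
def IsPartition (lam : ℕ → ℕ) (ℓ : ℕ) : Prop :=
  (∀ i j, 1 ≤ i → i ≤ j → lam j ≤ lam i) ∧ (∀ i, ℓ < i → lam i = 0) ∧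
    (∀ i, 1 ≤ i → i ≤ ℓ → 1 ≤ lam i)

/-- `lam` is a partition with `ℓ` parts contained in an `n × m` board. -/
def IsPartitionIn (lam : ℕ → ℕ) (ℓ n m : ℕ) : Prop :=
  IsPartition lam ℓ ∧ ℓ ≤ n ∧ lam 1 ≤ m

/-- The rectangular partition `a^b` (`b` parts equal to `a`). -/
def rect (a b : ℕ) : ℕ → ℕ := fun i => if 1 ≤ i ∧ i ≤ b then a else 0

/-- The partition obtained from `lam` by deleting its `j`-th column. -/
def delCol (lam : ℕ → ℕ) (j : ℕ) : ℕ → ℕ :=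
  fun r => if j ≤ lam r then lam r - 1 else lam r

/-- The partition obtained from `lam` by deleting its `i`-th row. -/
def delRow (lam : ℕ → ℕ) (i : ℕ) : ℕ → ℕ :=
  fun r => if r < i then lam r else lam (r + 1)

/-- The `j`-th column length `λ'_j` of `lam` (with `ℓ` rows). -/
def conjP (lam : ℕ → ℕ) (ℓ j : ℕ) : ℕ :=
  ((Finset.Icc 1 ℓ).filter (fun r => j ≤ lam r)).card
section Basics

variable {K : Type*} [Field K]

lemma board_rect (a b : ℕ) : board (rect a b) b = Finset.Icc 1 b ×ˢ Finset.Icc 1 a := by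
  ext ⟨i, j⟩
  simp only [board, Finset.mem_filter, Finset.mem_product, Finset.mem_Icc]
  constructor
  · rintro ⟨⟨⟨h1, h2⟩, h3, _⟩, h5⟩
    refine ⟨⟨h1, h2⟩, h3, ?_⟩
    simpa [rect, h1, h2] using h5
  · rintro ⟨⟨h1, h2⟩, h3, h4⟩
    have hr : rect a b i = a := by simp [rect, h1, h2]
    refine ⟨⟨⟨h1, h2⟩, h3, ?_⟩, by rw [hr]; exact h4⟩
    calc j ≤ a := h4
    _ = rect a b i := hr.symm
    _ ≤ (Finset.Icc 1 b).sup (rect a b) := Finset.le_sup (by simp [Finset.mem_Icc, h1, h2])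

lemma mem_placements_rect {a b k : ℕ} {p : Finset (ℕ × ℕ)} :
    p ∈ placements (rect a b) b k ↔
      p ⊆ Finset.Icc 1 b ×ˢ Finset.Icc 1 a ∧ p.card = k ∧
        ∀ x ∈ p, ∀ y ∈ p, x ≠ y → x.1 ≠ y.1 ∧ x.2 ≠ y.2 := by
  simp [placements, board_rect, Finset.mem_filter, Finset.mem_powerset, and_assoc]

lemma placements_zero (lam : ℕ → ℕ) (ℓ : ℕ) : placements lam ℓ 0 = {∅} := by
  ext p
  simp only [placements, Finset.mem_filter, Finset.mem_powerset, Finset.mem_singleton,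
    Finset.card_eq_zero]
  constructor
  · rintro ⟨-, h, -⟩; exact h
  · rintro rfl; simp

lemma rInv_empty (lam : ℕ → ℕ) (ℓ : ℕ) : rInv lam ℓ (∅ : Finset (ℕ × ℕ)) = (board lam ℓ).card := by
  unfold rInv
  rw [Finset.filter_true_of_mem]
  intro c _
  simp

lemma qRook_zero (q : K) (a b : ℕ) : qRook q (rect a b) b 0 = q ^ (a * b) := by
  unfold qRook
  rw [placements_zero, Finset.sum_singleton, rInv_empty, board_rect,
    Finset.card_product, Nat.card_Icc, Nat.card_Icc]
  have h1 : b + 1 - 1 = b := by omega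
  have h2 : a + 1 - 1 = a := by omega
  rw [h1, h2, Nat.mul_comm]

end Basics
section ZeroAndAlg

variable {K : Type*} [Field K]

lemma placements_card_le_rows {a b k : ℕ} {p : Finset (ℕ × ℕ)}
    (hp : p ∈ placements (rect a b) b k) : k ≤ b := by
  rw [mem_placements_rect] at hp
  obtain ⟨hsub, hcard, hna⟩ := hp
  have hinj : Set.InjOn Prod.fst (↑p : Set (ℕ × ℕ)) := by
    intro x hx y hy hxy
    by_contra hne
    exact (hna x hx y hy hne).1 hxy
  have := Finset.card_le_card_of_injOn Prod.fst
    (fun x hx => (Finset.mem_product.mp (hsub hx)).1) hinj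
  simpa [hcard] using this

lemma placements_card_le_cols {a b k : ℕ} {p : Finset (ℕ × ℕ)}
    (hp : p ∈ placements (rect a b) b k) : k ≤ a := by
  rw [mem_placements_rect] at hp
  obtain ⟨hsub, hcard, hna⟩ := hp
  have hinj : Set.InjOn Prod.snd (↑p : Set (ℕ × ℕ)) := by
    intro x hx y hy hxy
    by_contra hne
    exact (hna x hx y hy hne).2 hxy
  have := Finset.card_le_card_of_injOn Prod.snd
    (fun x hx => (Finset.mem_product.mp (hsub hx)).2) hinj
  simpa [hcard] using this

lemma qRook_rect_eq_zero {a b k : ℕ} (q : K) (h : a < k ∨ b < k) :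
    qRook q (rect a b) b k = 0 := by
  have : placements (rect a b) b k = ∅ := by
    rw [Finset.eq_empty_iff_forall_notMem]
    intro p hp
    rcases h with h | h
    · exact absurd (placements_card_le_cols hp) (by omega)
    · exact absurd (placements_card_le_rows hp) (by omega)
  simp [qRook, this]

lemma qFall_nat_eq_zero {x k : ℕ} (q : K) (h : x < k) : qFall q (x : ℤ) k = 0 := by
  apply Finset.prod_eq_zero (Finset.mem_range.mpr h)
  simp [qInt]

lemma one_sub_q_ne_zero {q : K} (hq1 : ∀ j : ℕ, 0 < j → q ^ j ≠ 1) : 1 - q ≠ 0 := by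
  have := hq1 1 one_pos
  simp only [pow_one] at this
  exact sub_ne_zero.mpr fun h => this h.symm

lemma qInt_nat_ne_zero {q : K} (hq1 : ∀ j : ℕ, 0 < j → q ^ j ≠ 1) {j : ℕ} (hj : 0 < j) :
    qInt q (j : ℤ) ≠ 0 := by
  unfold qInt
  rw [zpow_natCast]
  exact div_ne_zero (sub_ne_zero.mpr fun h => hq1 j hj h.symm) (one_sub_q_ne_zero hq1)

lemma qInt_nat_eq_geom {q : K} (hq1 : ∀ j : ℕ, 0 < j → q ^ j ≠ 1) (j : ℕ) :
    qInt q (j : ℤ) = ∑ d ∈ Finset.range j, q ^ d := by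
  have hq : q ≠ 1 := by
    have := hq1 1 one_pos; simpa using this
  rw [geom_sum_eq hq, qInt, zpow_natCast]
  rw [div_eq_div_iff (sub_ne_zero.mpr fun h => hq h.symm) (sub_ne_zero.mpr hq)]
  ring

lemma qFact_ne_zero {q : K} (hq1 : ∀ j : ℕ, 0 < j → q ^ j ≠ 1) (n : ℕ) :
    qFact q n ≠ 0 := by
  unfold qFact qFall
  rw [Finset.prod_ne_zero_iff]
  intro t ht
  rw [Finset.mem_range] at ht
  have h : (n : ℤ) - t = ((n - t : ℕ) : ℤ) := by omega
  rw [h]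
  exact qInt_nat_ne_zero hq1 (by omega)

lemma sum_pow_gt_card (q : K) (S : Finset ℕ) :
    ∑ i ∈ S, q ^ (S.filter (fun j => i < j)).card = ∑ d ∈ Finset.range S.card, q ^ d := by
  induction S using Finset.strongInduction with
  | _ S ih =>
    rcases S.eq_empty_or_nonempty with rfl | hS
    · simp
    · set M := S.max' hS with hM
      have hMS : M ∈ S := S.max'_mem hS
      have hpos : 0 < S.card := Finset.card_pos.mpr hS
      have hcard : S.card = (S.erase M).card + 1 := by
        rw [Finset.card_erase_of_mem hMS]; omega
      rw [← Finset.add_sum_erase _ _ hMS]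
      have hfM : S.filter (fun j => M < j) = ∅ := by
        rw [Finset.filter_eq_empty_iff]
        intro j hj
        exact not_lt.mpr (S.le_max' j hj)
      have hstep : ∀ i ∈ S.erase M,
          (S.filter (fun j => i < j)).card = ((S.erase M).filter (fun j => i < j)).card + 1 := by
        intro i hi
        have hiM : i < M := lt_of_le_of_ne (S.le_max' i (Finset.mem_of_mem_erase hi))
          (Finset.ne_of_mem_erase hi)
        have hMf : M ∈ S.filter (fun j => i < j) := Finset.mem_filter.mpr ⟨hMS, hiM⟩
        rw [Finset.filter_erase, Finset.card_erase_of_mem hMf] at *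
        have : 0 < (S.filter (fun j => i < j)).card := Finset.card_pos.mpr ⟨M, hMf⟩
        omega
      rw [Finset.sum_congr rfl (fun i hi => by rw [hstep i hi])]
      simp only [pow_succ, hfM]
      have hih := ih (S.erase M) (Finset.erase_ssubset hMS)
      rw [hcard, geom_sum_succ, ← Finset.sum_mul, hih]
      simp only [Finset.card_empty, pow_zero]
      ring

end ZeroAndAlg
section Alg

variable {K : Type*} [Field K]

lemma qInt_natCast (q : K) (n : ℕ) : qInt q (n : ℤ) = (1 - q ^ n) / (1 - q) := by
  rw [qInt, zpow_natCast]

lemma qFall_succ_right (q : K) (x : ℤ) (m : ℕ) :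
    qFall q x (m + 1) = qFall q x m * qInt q (x - m) := by
  rw [qFall, Finset.prod_range_succ, ← qFall]

lemma qFall_succ_left (q : K) (x : ℤ) (m : ℕ) :
    qFall q x (m + 1) = qFall q (x - 1) m * qInt q x := by
  rw [qFall, Finset.prod_range_succ']
  congr 1
  · rw [qFall]
    apply Finset.prod_congr rfl
    intro t _
    congr 1
    push_cast
    ring
  · simp

lemma qFact_succ (q : K) (m : ℕ) : qFact q (m + 1) = qFact q m * qInt q ((m : ℤ) + 1) := by
  rw [qFact, qFact]
  have : ((m + 1 : ℕ) : ℤ) = (m : ℤ) + 1 := by push_cast; ring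
  rw [this, qFall_succ_left]
  simp

lemma qFall_nat_ne_zero {q : K} (hq1 : ∀ j : ℕ, 0 < j → q ^ j ≠ 1) {x m : ℕ} (h : m ≤ x) :
    qFall q (x : ℤ) m ≠ 0 := by
  rw [qFall, Finset.prod_ne_zero_iff]
  intro t ht
  rw [Finset.mem_range] at ht
  have hx : (x : ℤ) - t = ((x - t : ℕ) : ℤ) := by omega
  rw [hx]
  exact qInt_nat_ne_zero hq1 (by omega)

set_option maxHeartbeats 1000000 in
lemma alg_rec {q : K} (hq0 : q ≠ 0) (hq1 : ∀ j : ℕ, 0 < j → q ^ j ≠ 1)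
    (a b k : ℕ) (hk : 1 ≤ k) (hkb : k ≤ b) :
    q ^ ((a + 1 - k) * (b - k)) * (qFall q ((a : ℤ) + 1) k * qFall q (b : ℤ) k / qFact q k)
      = q ^ (b - k) * (q ^ ((a - k) * (b - k)) *
          (qFall q (a : ℤ) k * qFall q (b : ℤ) k / qFact q k))
        + (∑ d ∈ Finset.range (b - k + 1), q ^ d) *
          (q ^ ((a - (k - 1)) * (b - (k - 1))) *
            (qFall q (a : ℤ) (k - 1) * qFall q (b : ℤ) (k - 1) / qFact q (k - 1))) := by
  obtain ⟨m, rfl⟩ : ∃ m, k = m + 1 := ⟨k - 1, by omega⟩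
  obtain ⟨B, hB⟩ : ∃ B, b = B + (m + 1) := ⟨b - (m+1), by omega⟩
  subst hB
  have h1q := one_sub_q_ne_zero hq1
  have hFb : qFall q ((B + (m+1) : ℕ) : ℤ) m ≠ 0 := qFall_nat_ne_zero hq1 (by omega)
  have hFm : qFact q m ≠ 0 := qFact_ne_zero hq1 m
  have hk1 : qInt q ((m : ℤ) + 1) ≠ 0 := by
    have : ((m : ℤ) + 1) = ((m + 1 : ℕ) : ℤ) := by push_cast; ring
    rw [this]; exact qInt_nat_ne_zero hq1 (by omega)
  have hB1 : qInt q ((B + 1 : ℕ) : ℤ) ≠ 0 := qInt_nat_ne_zero hq1 (by omega)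
  have hGeom : (∑ d ∈ Finset.range (B + 1), q ^ d)
      = (1 - q ^ (B + 1)) / (1 - q) := by
    rw [← qInt_nat_eq_geom hq1, qInt_natCast]
  -- expansions of qFall (b) (m+1)
  have hfb : qFall q ((B + (m+1) : ℕ) : ℤ) (m + 1)
      = qFall q ((B + (m+1) : ℕ) : ℤ) m * ((1 - q ^ (B + 1)) / (1 - q)) := by
    rw [qFall_succ_right]
    congr 1
    have : ((B + (m+1) : ℕ) : ℤ) - m = ((B + 1 : ℕ) : ℤ) := by push_cast; ring
    rw [this, qInt_natCast]
  have hfact : qFact q (m + 1) = qFact q m * ((1 - q ^ (m + 1)) / (1 - q)) := by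
    rw [qFact_succ]
    congr 1
    have : ((m : ℤ) + 1) = ((m + 1 : ℕ) : ℤ) := by push_cast; ring
    rw [this, qInt_natCast]
  rcases lt_trichotomy a m with ha | rfl | ha
  · -- a < m : everything vanishes
    have z1 : qFall q ((a : ℤ) + 1) (m + 1) = 0 := by
      have : ((a : ℤ) + 1) = ((a + 1 : ℕ) : ℤ) := by push_cast; ring
      rw [this]; exact qFall_nat_eq_zero q (by omega)
    have z2 : qFall q (a : ℤ) (m + 1) = 0 := qFall_nat_eq_zero q (by omega)
    have z3 : qFall q (a : ℤ) (m + 1 - 1) = 0 := by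
      simpa using qFall_nat_eq_zero q (show a < m by omega)
    rw [z1, z2, z3]
    ring
  · -- a = m : k = a + 1
    have z2 : qFall q (a : ℤ) (a + 1) = 0 := qFall_nat_eq_zero q (by omega)
    have hfa1 : qFall q ((a : ℤ) + 1) (a + 1)
        = qFact q a * ((1 - q ^ (a + 1)) / (1 - q)) := by
      rw [qFall_succ_left]
      simp only [add_sub_cancel_right]
      rw [← qFact]
      congr 1
      have : ((a : ℤ) + 1) = ((a + 1 : ℕ) : ℤ) := by push_cast; ring
      rw [this, qInt_natCast]
    simp only [Nat.add_sub_cancel]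
    rw [z2, hfa1, hfb, hfact, hGeom]
    have e1 : a + 1 - (a + 1) = 0 := by omega
    have e2 : a - a = 0 := by omega
    have e0 : a - (a + 1) = 0 := by omega
    have e3 : B + (a + 1) - a = B + 1 := by omega
    rw [e1, e2, e0, e3]
    have hq1' : (1 - q ^ (a+1)) ≠ 0 := sub_ne_zero.mpr fun h => hq1 (a+1) (by omega) h.symm
    have hFq : qFall q (a : ℤ) a = qFact q a := rfl
    rw [hFq]
    field_simp
    ring
  · -- m < a : main case
    obtain ⟨A, hA⟩ : ∃ A, a = A + (m + 1) := ⟨a - (m+1), by omega⟩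
    subst hA
    have hFa : qFall q ((A + (m+1) : ℕ) : ℤ) m ≠ 0 := qFall_nat_ne_zero hq1 (by omega)
    have hfa1 : qFall q (((A + (m+1) : ℕ) : ℤ) + 1) (m + 1)
        = qFall q ((A + (m+1) : ℕ) : ℤ) m * ((1 - q ^ (A + m + 2)) / (1 - q)) := by
      rw [qFall_succ_left]
      simp only [add_sub_cancel_right]
      congr 1
      have : ((A + (m+1) : ℕ) : ℤ) + 1 = ((A + m + 2 : ℕ) : ℤ) := by push_cast; ring
      rw [this, qInt_natCast]
    have hfa : qFall q ((A + (m+1) : ℕ) : ℤ) (m + 1)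
        = qFall q ((A + (m+1) : ℕ) : ℤ) m * ((1 - q ^ (A + 1)) / (1 - q)) := by
      rw [qFall_succ_right]
      congr 1
      have : ((A + (m+1) : ℕ) : ℤ) - m = ((A + 1 : ℕ) : ℤ) := by push_cast; ring
      rw [this, qInt_natCast]
    simp only [Nat.add_sub_cancel]
    rw [hfa1, hfa, hfb, hfact, hGeom]
    have e1 : A + (m+1) + 1 - (m+1) = A + 1 := by omega
    have e4 : A + (m+1) - m = A + 1 := by omega
    have e5 : B + (m+1) - m = B + 1 := by omega
    rw [e1, e4, e5]
    have hq1' : (1 - q ^ (m+1)) ≠ 0 := sub_ne_zero.mpr fun h => hq1 (m+1) (by omega) h.symm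
    field_simp
    ring

end Alg
section Comb

variable {K : Type*} [Field K]

def shiftC : ℕ × ℕ → ℕ × ℕ := fun c => (c.1, c.2 + 1)

def unshiftC : ℕ × ℕ → ℕ × ℕ := fun c => (c.1, c.2 - 1)

lemma shiftC_inj : Function.Injective shiftC := by
  rintro ⟨i, j⟩ ⟨i', j'⟩ h
  simp only [shiftC, Prod.mk.injEq] at h
  exact Prod.ext h.1 (by omega)

def rcond (p : Finset (ℕ × ℕ)) (c : ℕ × ℕ) : Prop :=
  c ∉ p ∧ (∀ r ∈ p, r.1 = c.1 → r.2 < c.2) ∧ (∀ r ∈ p, r.2 = c.2 → r.1 < c.1)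

lemma rInv_eq (lam : ℕ → ℕ) (ℓ : ℕ) (p : Finset (ℕ × ℕ)) :
    rInv lam ℓ p = ((board lam ℓ).filter (rcond p)).card := by
  unfold rInv rcond
  convert rfl

def freeRows (b : ℕ) (p : Finset (ℕ × ℕ)) : Finset ℕ :=
  (Finset.Icc 1 b).filter (fun i => ∀ r ∈ p, r.1 ≠ i)

lemma freeRows_card {a b k : ℕ} {p : Finset (ℕ × ℕ)}
    (hp : p ∈ placements (rect a b) b k) : (freeRows b p).card = b - k := by
  rw [mem_placements_rect] at hp
  obtain ⟨hsub, hcard, hna⟩ := hp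
  have himg : p.image Prod.fst ⊆ Finset.Icc 1 b := by
    intro i hi
    obtain ⟨c, hc, rfl⟩ := Finset.mem_image.mp hi
    exact (Finset.mem_product.mp (hsub hc)).1
  have : freeRows b p = Finset.Icc 1 b \ p.image Prod.fst := by
    ext i
    simp only [freeRows, Finset.mem_filter, Finset.mem_sdiff, Finset.mem_image, not_exists]
    constructor
    · rintro ⟨h1, h2⟩
      exact ⟨h1, by push_neg; intro c hc; exact h2 c hc⟩
    · rintro ⟨h1, h2⟩
      push_neg at h2
      exact ⟨h1, fun r hr => h2 r hr⟩
  rw [this, Finset.card_sdiff_of_subset himg, Finset.card_image_of_injOn, hcard, Nat.card_Icc]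
  · omega
  · intro x hx y hy hxy
    by_contra hne
    exact (hna x hx y hy hne).1 hxy

/-- The cells with column `≥ 2` counted by `rInv` on the `(a+1) × b` board for a placement
`E ∪ shift p'` (with `E` in column 1) biject with the cells counted for `p'` on `a × b`. -/
lemma S2_eq (a b : ℕ) (p' E : Finset (ℕ × ℕ)) (hp' : p' ⊆ Finset.Icc 1 b ×ˢ Finset.Icc 1 a)
    (hE : ∀ c ∈ E, c.2 = 1) :
    ((board (rect (a+1) b) b).filter (fun c => rcond (E ∪ p'.image shiftC) c ∧ c.2 ≠ 1))
      = ((board (rect a b) b).filter (rcond p')).image shiftC := by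
  ext ⟨i, j⟩
  simp only [Finset.mem_filter, Finset.mem_image, board_rect, Finset.mem_product,
    Finset.mem_Icc]
  constructor
  · rintro ⟨⟨⟨hi1, hi2⟩, hj1, hj2⟩, ⟨hnp, hrow, hcol⟩, hj⟩
    have hj2' : 2 ≤ j := by omega
    refine ⟨(i, j - 1), ⟨⟨⟨hi1, hi2⟩, by omega, ?_⟩, ?_, ?_, ?_⟩, ?_⟩
    · -- j - 1 ≤ a
      omega
    · -- (i, j-1) ∉ p'
      intro hmem
      exact hnp (Finset.mem_union_right _ (Finset.mem_image.mpr
        ⟨(i, j - 1), hmem, by simp [shiftC]; omega⟩))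
    · -- row condition
      intro r hr h1
      have := hrow (shiftC r) (Finset.mem_union_right _ (Finset.mem_image_of_mem _ hr))
        (by simpa [shiftC] using h1)
      simp only [shiftC] at this
      omega
    · -- column condition
      intro r hr h2
      have hr2 : r.2 + 1 = j := by omega
      exact hcol (shiftC r) (Finset.mem_union_right _ (Finset.mem_image_of_mem _ hr))
        (by simpa [shiftC] using hr2)
    · simp [shiftC]; omega
  · rintro ⟨⟨i', j'⟩, ⟨⟨⟨hi1, hi2⟩, hj1, hj2⟩, hnp, hrow, hcol⟩, heq⟩
    simp only [shiftC, Prod.mk.injEq] at heq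
    obtain ⟨rfl, rfl⟩ := heq
    refine ⟨⟨⟨hi1, hi2⟩, by omega, by omega⟩, ⟨?_, ?_, ?_⟩, by omega⟩
    · -- not in union
      intro hmem
      rcases Finset.mem_union.mp hmem with h | h
      · have := hE _ h; omega
      · obtain ⟨c, hc, hceq⟩ := Finset.mem_image.mp h
        have : c = (i', j') := shiftC_inj (by simpa [shiftC] using hceq)
        exact hnp (this ▸ hc)
    · -- row
      intro r hr h1
      rcases Finset.mem_union.mp hr with h | h
      · have := hE _ h; omega
      · obtain ⟨c, hc, rfl⟩ := Finset.mem_image.mp h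
        have := hrow c hc (by simpa [shiftC] using h1)
        simp only [shiftC]
        omega
    · -- col
      intro r hr h2
      rcases Finset.mem_union.mp hr with h | h
      · have := hE _ h
        simp only [shiftC] at h2 ⊢
        omega
      · obtain ⟨c, hc, rfl⟩ := Finset.mem_image.mp h
        simp only [shiftC] at h2 ⊢
        exact hcol c hc (by omega)

/-- Column-1 counted cells, case A (no rook in column 1). -/
lemma S1_A (a b : ℕ) (p' : Finset (ℕ × ℕ)) (hp' : p' ⊆ Finset.Icc 1 b ×ˢ Finset.Icc 1 a) :
    ((board (rect (a+1) b) b).filter (fun c => rcond (p'.image shiftC) c ∧ c.2 = 1))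
      = (freeRows b p').image (fun i => (i, 1)) := by
  ext ⟨i, j⟩
  simp only [Finset.mem_filter, Finset.mem_image, board_rect, Finset.mem_product,
    Finset.mem_Icc, freeRows, Finset.mem_filter]
  constructor
  · rintro ⟨⟨⟨hi1, hi2⟩, hj1, hj2⟩, ⟨hnp, hrow, hcol⟩, rfl⟩
    refine ⟨i, ⟨⟨hi1, hi2⟩, ?_⟩, rfl⟩
    intro r hr hri
    have := hrow (shiftC r) (Finset.mem_image_of_mem _ hr) (by simpa [shiftC] using hri)
    simp only [shiftC] at this
    omega
  · rintro ⟨i', ⟨⟨hi1, hi2⟩, hfree⟩, heq⟩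
    obtain ⟨rfl, rfl⟩ : i' = i ∧ 1 = j := by simpa [Prod.ext_iff] using heq
    refine ⟨⟨⟨hi1, hi2⟩, by omega, by omega⟩, ⟨?_, ?_, ?_⟩, rfl⟩
    · intro hmem
      obtain ⟨c, hc, hceq⟩ := Finset.mem_image.mp hmem
      have hc2 : 1 ≤ c.2 := (Finset.mem_Icc.mp (Finset.mem_product.mp (hp' hc)).2).1
      simp only [shiftC, Prod.ext_iff] at hceq
      omega
    · intro r hr h1
      obtain ⟨c, hc, rfl⟩ := Finset.mem_image.mp hr
      exact absurd (by simpa [shiftC] using h1) (hfree c hc)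
    · intro r hr h2
      obtain ⟨c, hc, rfl⟩ := Finset.mem_image.mp hr
      have hc2 : 1 ≤ c.2 := (Finset.mem_Icc.mp (Finset.mem_product.mp (hp' hc)).2).1
      simp only [shiftC] at h2
      omega

end Comb
section Comb2

variable {K : Type*} [Field K]

lemma S1_B (a b : ℕ) (p' : Finset (ℕ × ℕ)) (hp' : p' ⊆ Finset.Icc 1 b ×ˢ Finset.Icc 1 a)
    (i0 : ℕ) (hi0 : i0 ∈ freeRows b p') :
    ((board (rect (a+1) b) b).filter
        (fun c => rcond (insert (i0, 1) (p'.image shiftC)) c ∧ c.2 = 1))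
      = ((freeRows b p').filter (fun i => i0 < i)).image (fun i => (i, 1)) := by
  ext ⟨i, j⟩
  simp only [Finset.mem_filter, Finset.mem_image, board_rect, Finset.mem_product,
    Finset.mem_Icc, freeRows]
  constructor
  · rintro ⟨⟨⟨hi1, hi2⟩, hj1, hj2⟩, ⟨hnp, hrow, hcol⟩, rfl⟩
    have hlt : i0 < i := hcol (i0, 1) (Finset.mem_insert_self _ _) rfl
    refine ⟨i, ⟨⟨⟨hi1, hi2⟩, ?_⟩, hlt⟩, rfl⟩
    intro r hr hri
    have := hrow (shiftC r) (Finset.mem_insert_of_mem (Finset.mem_image_of_mem _ hr))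
      (by simpa [shiftC] using hri)
    simp only [shiftC] at this
    omega
  · rintro ⟨i', ⟨⟨⟨hi1, hi2⟩, hfree⟩, hlt⟩, heq⟩
    obtain ⟨rfl, rfl⟩ : i' = i ∧ 1 = j := by simpa [Prod.ext_iff] using heq
    refine ⟨⟨⟨hi1, hi2⟩, by omega, by omega⟩, ⟨?_, ?_, ?_⟩, rfl⟩
    · intro hmem
      rcases Finset.mem_insert.mp hmem with h | h
      · simp only [Prod.ext_iff] at h; omega
      · obtain ⟨c, hc, hceq⟩ := Finset.mem_image.mp h
        have hc2 : 1 ≤ c.2 := (Finset.mem_Icc.mp (Finset.mem_product.mp (hp' hc)).2).1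
        simp only [shiftC, Prod.ext_iff] at hceq
        omega
    · intro r hr h1
      rcases Finset.mem_insert.mp hr with rfl | h
      · simp only at h1; omega
      · obtain ⟨c, hc, rfl⟩ := Finset.mem_image.mp h
        exact absurd (by simpa [shiftC] using h1) (hfree c hc)
    · intro r hr h2
      rcases Finset.mem_insert.mp hr with rfl | h
      · simpa using hlt
      · obtain ⟨c, hc, rfl⟩ := Finset.mem_image.mp h
        have hc2 : 1 ≤ c.2 := (Finset.mem_Icc.mp (Finset.mem_product.mp (hp' hc)).2).1
        simp only [shiftC] at h2
        omega

lemma rInv_split (a b : ℕ) (p : Finset (ℕ × ℕ)) :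
    rInv (rect (a+1) b) b p
      = ((board (rect (a+1) b) b).filter (fun c => rcond p c ∧ c.2 = 1)).card
        + ((board (rect (a+1) b) b).filter (fun c => rcond p c ∧ c.2 ≠ 1)).card := by
  rw [rInv_eq]
  rw [← Finset.filter_filter, ← Finset.filter_filter]
  exact (Finset.card_filter_add_card_filter_not (s := (board (rect (a+1) b) b).filter (rcond p)) (fun c : ℕ × ℕ => c.2 = 1)).symm

lemma statA {a b k : ℕ} {p' : Finset (ℕ × ℕ)} (hp' : p' ∈ placements (rect a b) b k) :
    rInv (rect (a+1) b) b (p'.image shiftC) = (b - k) + rInv (rect a b) b p' := by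
  have hsub := (mem_placements_rect.mp hp').1
  rw [rInv_split]
  congr 1
  · have hinj : Function.Injective (fun i : ℕ => (i, 1)) := fun x y h => (Prod.ext_iff.mp h).1
    rw [S1_A a b p' hsub, Finset.card_image_of_injective _ hinj, freeRows_card hp']
  · have h2 := S2_eq a b p' ∅ hsub (by simp)
    rw [Finset.empty_union] at h2
    rw [h2, Finset.card_image_of_injective _ shiftC_inj, rInv_eq]

lemma statB {a b k : ℕ} {p' : Finset (ℕ × ℕ)} (hp' : p' ∈ placements (rect a b) b k)
    {i0 : ℕ} (hi0 : i0 ∈ freeRows b p') :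
    rInv (rect (a+1) b) b (insert (i0, 1) (p'.image shiftC))
      = ((freeRows b p').filter (fun j => i0 < j)).card + rInv (rect a b) b p' := by
  have hsub := (mem_placements_rect.mp hp').1
  rw [rInv_split]
  congr 1
  · have hinj : Function.Injective (fun i : ℕ => (i, 1)) := fun x y h => (Prod.ext_iff.mp h).1
    rw [S1_B a b p' hsub i0 hi0, Finset.card_image_of_injective _ hinj]
  · have h2 := S2_eq a b p' {(i0, 1)} hsub (by simp)
    have : {(i0, 1)} ∪ p'.image shiftC = insert (i0, 1) (p'.image shiftC) := by
      rw [Finset.insert_eq]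
    rw [this] at h2
    rw [h2, Finset.card_image_of_injective _ shiftC_inj, rInv_eq]

lemma memA {a b k : ℕ} {p' : Finset (ℕ × ℕ)} (hp' : p' ∈ placements (rect a b) b k) :
    p'.image shiftC ∈ placements (rect (a+1) b) b k ∧ ∀ r ∈ p'.image shiftC, r.2 ≠ 1 := by
  obtain ⟨hsub, hcard, hna⟩ := mem_placements_rect.mp hp'
  have hcol : ∀ r ∈ p'.image shiftC, r.2 ≠ 1 := by
    intro r hr
    obtain ⟨c, hc, rfl⟩ := Finset.mem_image.mp hr
    have hc2 : 1 ≤ c.2 := (Finset.mem_Icc.mp (Finset.mem_product.mp (hsub hc)).2).1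
    simp only [shiftC]
    omega
  refine ⟨mem_placements_rect.mpr ⟨?_, ?_, ?_⟩, hcol⟩
  · intro r hr
    obtain ⟨c, hc, rfl⟩ := Finset.mem_image.mp hr
    have := Finset.mem_product.mp (hsub hc)
    simp only [Finset.mem_product, Finset.mem_Icc, shiftC] at *
    omega
  · rw [Finset.card_image_of_injective _ shiftC_inj, hcard]
  · intro x hx y hy hxy
    obtain ⟨c, hc, rfl⟩ := Finset.mem_image.mp hx
    obtain ⟨d, hd, rfl⟩ := Finset.mem_image.mp hy
    have hcd : c ≠ d := fun h => hxy (by rw [h])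
    have := hna c hc d hd hcd
    simp only [shiftC]
    exact ⟨this.1, by have := this.2; simp; omega⟩

lemma memB {a b k : ℕ} {p' : Finset (ℕ × ℕ)} (hp' : p' ∈ placements (rect a b) b k)
    {i0 : ℕ} (hi0 : i0 ∈ freeRows b p') :
    insert (i0, 1) (p'.image shiftC) ∈ placements (rect (a+1) b) b (k+1) ∧
      ∃ r ∈ insert (i0, 1) (p'.image shiftC), r.2 = 1 := by
  obtain ⟨hpl, hcol⟩ := memA hp'
  obtain ⟨hsub, hcard, hna⟩ := mem_placements_rect.mp hpl
  obtain ⟨hi0b, hi0f⟩ := Finset.mem_filter.mp hi0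
  rw [Finset.mem_Icc] at hi0b
  have hnotmem : (i0, 1) ∉ p'.image shiftC := fun h => hcol _ h rfl
  refine ⟨mem_placements_rect.mpr ⟨?_, ?_, ?_⟩, ⟨(i0, 1), Finset.mem_insert_self _ _, rfl⟩⟩
  · intro r hr
    rcases Finset.mem_insert.mp hr with rfl | h
    · simp only [Finset.mem_product, Finset.mem_Icc]
      omega
    · exact hsub h
  · rw [Finset.card_insert_of_notMem hnotmem, hcard]
  · intro x hx y hy hxy
    rcases Finset.mem_insert.mp hx with rfl | hx' <;> rcases Finset.mem_insert.mp hy with rfl | hy'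
    · exact absurd rfl hxy
    · obtain ⟨c, hc, rfl⟩ := Finset.mem_image.mp hy'
      refine ⟨fun h => hi0f c hc (by simpa [shiftC] using h.symm), ?_⟩
      have hc2 : 1 ≤ c.2 := (Finset.mem_Icc.mp (Finset.mem_product.mp
        ((mem_placements_rect.mp hp').1 hc)).2).1
      simp only [shiftC]
      omega
    · obtain ⟨c, hc, rfl⟩ := Finset.mem_image.mp hx'
      refine ⟨fun h => hi0f c hc (by simpa [shiftC] using h), ?_⟩
      have hc2 : 1 ≤ c.2 := (Finset.mem_Icc.mp (Finset.mem_product.mp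
        ((mem_placements_rect.mp hp').1 hc)).2).1
      simp only [shiftC]
      omega
    · exact hna x hx' y hy' hxy

end Comb2
section Sums

variable {K : Type*} [Field K]

lemma unshift_lem {a b k : ℕ} {p : Finset (ℕ × ℕ)} (hp : p ∈ placements (rect (a+1) b) b k)
    (hcells : ∀ c ∈ p, 2 ≤ c.2) :
    p.image unshiftC ∈ placements (rect a b) b k ∧ (p.image unshiftC).image shiftC = p := by
  obtain ⟨hsub, hcard, hna⟩ := mem_placements_rect.mp hp
  have hinjOn : Set.InjOn unshiftC (↑p : Set (ℕ × ℕ)) := by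
    intro x hx y hy hxy
    have h2x := hcells x hx
    have h2y := hcells y hy
    simp only [unshiftC, Prod.ext_iff] at hxy
    exact Prod.ext hxy.1 (by omega)
  constructor
  · refine mem_placements_rect.mpr ⟨?_, ?_, ?_⟩
    · intro r hr
      obtain ⟨c, hc, rfl⟩ := Finset.mem_image.mp hr
      have := Finset.mem_product.mp (hsub hc)
      have h2 := hcells c hc
      simp only [Finset.mem_product, Finset.mem_Icc, unshiftC] at *
      omega
    · rw [Finset.card_image_of_injOn hinjOn, hcard]
    · intro x hx y hy hxy
      obtain ⟨c, hc, rfl⟩ := Finset.mem_image.mp hx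
      obtain ⟨d, hd, rfl⟩ := Finset.mem_image.mp hy
      have hcd : c ≠ d := fun h => hxy (by rw [h])
      have := hna c hc d hd hcd
      have h2c := hcells c hc
      have h2d := hcells d hd
      simp only [unshiftC]
      exact ⟨this.1, by have := this.2; simp; omega⟩
  · rw [Finset.image_image]
    have : ∀ c ∈ p, (shiftC ∘ unshiftC) c = c := by
      intro c hc
      have := hcells c hc
      simp only [Function.comp, shiftC, unshiftC]
      exact Prod.ext rfl (by omega)
    rw [Finset.image_congr (fun c hc => this c hc)]
    simp

lemma sumA (q : K) (a b k : ℕ) :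
    ∑ p ∈ (placements (rect (a+1) b) b k).filter (fun p => ∀ r ∈ p, r.2 ≠ 1),
      q ^ rInv (rect (a+1) b) b p
    = q ^ (b - k) * qRook q (rect a b) b k := by
  rw [qRook, Finset.mul_sum]
  symm
  apply Finset.sum_bij (fun p' _ => p'.image shiftC)
  · intro p' hp'
    exact Finset.mem_filter.mpr ⟨(memA hp').1, (memA hp').2⟩
  · intro p1 h1 p2 h2 heq
    exact Finset.image_injective shiftC_inj heq
  · intro p hp
    obtain ⟨hpl, hcol⟩ := Finset.mem_filter.mp hp
    have hcells : ∀ c ∈ p, 2 ≤ c.2 := by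
      intro c hc
      have := (Finset.mem_Icc.mp (Finset.mem_product.mp
        ((mem_placements_rect.mp hpl).1 hc)).2).1
      have := hcol c hc
      omega
    obtain ⟨hmem, himg⟩ := unshift_lem hpl hcells
    exact ⟨p.image unshiftC, hmem, himg⟩
  · intro p' hp'
    rw [statA hp', pow_add]

lemma sumB (q : K) (a b k : ℕ) :
    ∑ p ∈ (placements (rect (a+1) b) b (k+1)).filter (fun p => ¬ ∀ r ∈ p, r.2 ≠ 1),
      q ^ rInv (rect (a+1) b) b p
    = (∑ d ∈ Finset.range (b - k), q ^ d) * qRook q (rect a b) b k := by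
  rw [qRook, Finset.mul_sum]
  have hstep : ∀ p' ∈ placements (rect a b) b k,
      (∑ d ∈ Finset.range (b - k), q ^ d) * q ^ rInv (rect a b) b p'
        = ∑ i ∈ freeRows b p',
            q ^ (((freeRows b p').filter (fun j => i < j)).card + rInv (rect a b) b p') := by
    intro p' hp'
    rw [← freeRows_card hp', ← sum_pow_gt_card q (freeRows b p'), Finset.sum_mul]
    exact Finset.sum_congr rfl (fun i _ => (pow_add q _ _).symm)
  rw [Finset.sum_congr rfl hstep, Finset.sum_sigma']
  symm
  apply Finset.sum_bij (fun (x : Σ _ : Finset (ℕ × ℕ), ℕ) _ => insert (x.2, 1) (x.1.image shiftC))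
  · rintro ⟨p', i0⟩ hx
    obtain ⟨hp', hi0⟩ := Finset.mem_sigma.mp hx
    refine Finset.mem_filter.mpr ⟨(memB hp' hi0).1, ?_⟩
    push_neg
    exact (memB hp' hi0).2
  · rintro ⟨p1, i1⟩ hx ⟨p2, i2⟩ hy heq
    obtain ⟨hp1, hi1⟩ := Finset.mem_sigma.mp hx
    obtain ⟨hp2, hi2⟩ := Finset.mem_sigma.mp hy
    have hcells : ∀ (p' : Finset (ℕ × ℕ)), p' ∈ placements (rect a b) b k →
        ∀ c ∈ p'.image shiftC, c.2 ≠ 1 := fun p' hp' => (memA hp').2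
    have hfilter : ∀ (p' : Finset (ℕ × ℕ)) (i : ℕ), p' ∈ placements (rect a b) b k →
        (insert (i, 1) (p'.image shiftC)).filter (fun c => c.2 ≠ 1) = p'.image shiftC := by
      intro p' i hp'
      rw [Finset.filter_insert]
      simp only [ne_eq, not_true_eq_false, if_false]
      exact Finset.filter_true_of_mem (hcells p' hp')
    have h1 : p1.image shiftC = p2.image shiftC := by
      rw [← hfilter p1 i1 hp1, ← hfilter p2 i2 hp2, heq]
    have hp12 : p1 = p2 := Finset.image_injective shiftC_inj h1
    have hi12 : i1 = i2 := by
      have hm : ((i1 : ℕ), 1) ∈ insert ((i2 : ℕ), 1) (p2.image shiftC) := by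
        rw [← heq]; exact Finset.mem_insert_self _ _
      rcases Finset.mem_insert.mp hm with h | h
      · exact (Prod.ext_iff.mp h).1
      · exact absurd rfl (hcells p2 hp2 _ h)
    subst hp12; subst hi12; rfl
  · intro p hp
    obtain ⟨hpl, hex⟩ := Finset.mem_filter.mp hp
    push_neg at hex
    obtain ⟨r0, hr0, hr0col⟩ := hex
    obtain ⟨hsub, hcard, hna⟩ := mem_placements_rect.mp hpl
    have hcells : ∀ c ∈ p.erase r0, 2 ≤ c.2 := by
      intro c hc
      have hcp := Finset.mem_of_mem_erase hc
      have hne := Finset.ne_of_mem_erase hc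
      have h1 := (Finset.mem_Icc.mp (Finset.mem_product.mp (hsub hcp)).2).1
      have h2 := (hna c hcp r0 hr0 hne).2
      omega
    have hplerase : p.erase r0 ∈ placements (rect (a+1) b) b k := by
      refine mem_placements_rect.mpr ⟨fun c hc => hsub (Finset.mem_of_mem_erase hc), ?_, ?_⟩
      · rw [Finset.card_erase_of_mem hr0, hcard]
        omega
      · intro x hx y hy hxy
        exact hna x (Finset.mem_of_mem_erase hx) y (Finset.mem_of_mem_erase hy) hxy
    obtain ⟨hmem, himg⟩ := unshift_lem hplerase hcells
    have hi0 : r0.1 ∈ freeRows b ((p.erase r0).image unshiftC) := by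
      refine Finset.mem_filter.mpr ⟨(Finset.mem_product.mp (hsub hr0)).1, ?_⟩
      intro r hr
      obtain ⟨c, hc, rfl⟩ := Finset.mem_image.mp hr
      have := (hna c (Finset.mem_of_mem_erase hc) r0 hr0 (Finset.ne_of_mem_erase hc)).1
      simpa [unshiftC] using this
    refine ⟨⟨(p.erase r0).image unshiftC, r0.1⟩, Finset.mem_sigma.mpr ⟨hmem, hi0⟩, ?_⟩
    show insert (r0.1, 1) _ = p
    rw [himg]
    have : (r0.1, 1) = r0 := Prod.ext rfl hr0col.symm
    rw [this, Finset.insert_erase hr0]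
  · rintro ⟨p', i0⟩ hx
    obtain ⟨hp', hi0⟩ := Finset.mem_sigma.mp hx
    rw [statB hp' hi0, pow_add]

lemma qRook_rec (q : K) (a b k : ℕ) :
    qRook q (rect (a+1) b) b (k+1)
      = q ^ (b - (k+1)) * qRook q (rect a b) b (k+1)
        + (∑ d ∈ Finset.range (b - k), q ^ d) * qRook q (rect a b) b k := by
  rw [qRook, ← Finset.sum_filter_add_sum_filter_not _ (fun p => ∀ r ∈ p, r.2 ≠ 1),
    sumA, sumB]

end Sums
section Main

variable {K : Type*} [Field K]

lemma main_formula (q : K) (hq0 : q ≠ 0) (hq1 : ∀ j : ℕ, 0 < j → q ^ j ≠ 1) (b : ℕ) :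
    ∀ a k, k ≤ b → qRook q (rect a b) b k
      = q ^ ((a - k) * (b - k)) * (qFall q (a : ℤ) k * qFall q (b : ℤ) k / qFact q k) := by
  intro a
  induction a with
  | zero =>
    intro k _
    rcases Nat.eq_zero_or_pos k with rfl | hk1
    · rw [qRook_zero]
      simp [qFall, qFact]
    · rw [qRook_rect_eq_zero q (Or.inl hk1), qFall_nat_eq_zero q hk1]
      simp
  | succ a ih =>
    intro k hkb
    rcases Nat.eq_zero_or_pos k with rfl | hk1
    · rw [qRook_zero]
      simp [qFall, qFact]
    · obtain ⟨k', rfl⟩ : ∃ k', k = k' + 1 := ⟨k - 1, by omega⟩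
      rw [qRook_rec, ih (k' + 1) hkb, ih k' (by omega)]
      have halg := alg_rec hq0 hq1 a b (k' + 1) (by omega) hkb
      have he : b - (k' + 1) + 1 = b - k' := by omega
      rw [he] at halg
      simp only [Nat.add_sub_cancel] at halg
      have hcast : ((a : ℤ) + 1) = (((a + 1 : ℕ) : ℤ)) := by push_cast; ring
      rw [hcast] at halg
      exact halg.symm

end Main

theorem stmt4' (q : K) (hq0 : q ≠ 0) (hq1 : ∀ j : ℕ, 0 < j → q ^ j ≠ 1)
    (a b k : ℕ) :
    qRook q (rect a b) b k =
      q ^ ((a - k) * (b - k)) * (qFall q (a : ℤ) k * qFall q (b : ℤ) k / qFact q k) := by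
  by_cases hkb : k ≤ b
  · exact main_formula q hq0 hq1 b a k hkb
  · push_neg at hkb
    rw [qRook_rect_eq_zero q (Or.inr hkb), qFall_nat_eq_zero q hkb]
    simp

/-- `R_k(a^b) = q^{(a-k)(b-k)} [a]_k [b]_k / [k]!`. -/
theorem stmt4 (q : K) (hq0 : q ≠ 0) (hq1 : ∀ j : ℕ, 0 < j → q ^ j ≠ 1)
    (a b k : ℕ) :
    qRook q (rect a b) b k =
      q ^ ((a - k) * (b - k)) * (qFall q (a : ℤ) k * qFall q (b : ℤ) k / qFact q k) := by
  exact stmt4' q hq0 hq1 a b k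
end
end

section
/- For a partition λ = (λ_1,...,λ_ℓ) with ℓ ≤ n and any fixed k, we have ∑_{i=1}^{n} q^{i−1+λ_i} R_k(λ∖row_i) = [n]·R_k(λ) − [k]·R_k(λ), where λ∖row_i denotes the partition obtained by removing the i-th row of λ (with λ_i = 0 and λ∖row_i = λ when i > ℓ). -/
open Finset

noncomputable section
open scoped Classical

variable {K : Type*} [Field K]

/-! ### Auxiliary lemmas -/

lemma mem_board {lam : ℕ → ℕ} {ℓ : ℕ} {c : ℕ × ℕ} :
    c ∈ board lam ℓ ↔ 1 ≤ c.1 ∧ c.1 ≤ ℓ ∧ 1 ≤ c.2 ∧ c.2 ≤ lam c.1 := by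
  unfold board
  simp only [Finset.mem_filter, Finset.mem_product, Finset.mem_Icc]
  constructor
  · rintro ⟨⟨⟨h1, h2⟩, h3, _⟩, h5⟩; exact ⟨h1, h2, h3, h5⟩
  · rintro ⟨h1, h2, h3, h5⟩
    refine ⟨⟨⟨h1, h2⟩, h3, le_trans h5 ?_⟩, h5⟩
    exact Finset.le_sup (f := lam) (Finset.mem_Icc.2 ⟨h1, h2⟩)

/-- Row-shift map skipping row `i`. -/
def sh (i : ℕ) (c : ℕ × ℕ) : ℕ × ℕ := if c.1 < i then c else (c.1 + 1, c.2)

def unsh (i : ℕ) (c : ℕ × ℕ) : ℕ × ℕ := if c.1 < i then c else (c.1 - 1, c.2)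

lemma sh_snd (i : ℕ) (c : ℕ × ℕ) : (sh i c).2 = c.2 := by
  unfold sh; split <;> rfl

lemma sh_fst (i : ℕ) (c : ℕ × ℕ) :
    (sh i c).1 = if c.1 < i then c.1 else c.1 + 1 := by
  unfold sh; split <;> simp_all

lemma unsh_sh (i : ℕ) (c : ℕ × ℕ) : unsh i (sh i c) = c := by
  unfold sh unsh; split <;> simp_all <;> omega

lemma sh_unsh (i : ℕ) {c : ℕ × ℕ} (h1 : 1 ≤ c.1) (h : c.1 ≠ i) :
    sh i (unsh i c) = c := by
  rcases c with ⟨a, b⟩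
  simp only at h1 h
  unfold unsh sh
  by_cases hai : a < i
  · simp [hai]
  · have h2 : ¬ (a - 1 < i) := by omega
    simp only [hai, if_false]
    simp only [h2, if_false]
    exact Prod.ext (by simp; omega) rfl

lemma sh_inj (i : ℕ) : Function.Injective (sh i) :=
  Function.LeftInverse.injective (unsh_sh i)

lemma sh_fst_eq_iff (i : ℕ) (a b : ℕ × ℕ) : (sh i a).1 = (sh i b).1 ↔ a.1 = b.1 := by
  rw [sh_fst, sh_fst]; split <;> split <;> omega

lemma sh_fst_lt_iff (i : ℕ) (a b : ℕ × ℕ) : (sh i a).1 < (sh i b).1 ↔ a.1 < b.1 := by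
  rw [sh_fst, sh_fst]; split <;> split <;> omega

lemma sh_fst_ne (i : ℕ) (c : ℕ × ℕ) : (sh i c).1 ≠ i := by
  rw [sh_fst]; split <;> omega

lemma mem_placements {lam : ℕ → ℕ} {ℓ k : ℕ} {p : Finset (ℕ × ℕ)} :
    p ∈ placements lam ℓ k ↔ p ⊆ board lam ℓ ∧ p.card = k ∧
      ∀ a ∈ p, ∀ b ∈ p, a ≠ b → a.1 ≠ b.1 ∧ a.2 ≠ b.2 := by
  unfold placements
  simp [Finset.mem_filter, Finset.mem_powerset, and_assoc]

lemma sh_mem_board {lam : ℕ → ℕ} {ℓ i : ℕ} (hpart : IsPartition lam ℓ)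
    (hi : 1 ≤ i) {c : ℕ × ℕ} :
    c ∈ board (delRow lam i) ℓ ↔ sh i c ∈ board lam ℓ := by
  rcases c with ⟨r, j⟩
  rw [mem_board, mem_board]
  simp only [sh_fst, sh_snd]
  unfold delRow
  by_cases hri : r < i
  · simp [hri]
  · simp only [hri, if_false]
    constructor
    · rintro ⟨h1, h2, h3, h4⟩
      have hrl : r ≠ ℓ := by
        intro he
        have : lam (r + 1) = 0 := hpart.2.1 _ (by omega)
        omega
      exact ⟨by omega, by omega, h3, h4⟩
    · rintro ⟨h1, h2, h3, h4⟩
      exact ⟨by omega, by omega, h3, h4⟩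

lemma geom_diff {q : K} (hq1 : ∀ j : ℕ, 0 < j → q ^ j ≠ 1) {k n : ℕ} (hkn : k ≤ n) :
    qInt q (n : ℤ) - qInt q (k : ℤ) = ∑ j ∈ Finset.Ico k n, q ^ j := by
  have hq : q ≠ 1 := by simpa using hq1 1 one_pos
  rw [geom_sum_Ico hq hkn]
  unfold qInt
  rw [zpow_natCast, zpow_natCast]
  have h1 : (1 : K) - q ≠ 0 := by
    intro h; exact hq (sub_eq_zero.mp h).symm
  have h2 : q - 1 ≠ 0 := by
    intro h; exact hq (sub_eq_zero.mp h)
  field_simp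
  ring

/-- The key row-sum identity: for `S ⊆ [1,n]`,
`∑_{i ∈ [1,n] \ S} q^{i-1+|S ∩ (i,∞)|} = ∑_{j=|S|}^{n-1} q^j`. -/
lemma rowsum (q : K) : ∀ (n : ℕ) (S : Finset ℕ), S ⊆ Finset.Icc 1 n →
    ∑ i ∈ (Finset.Icc 1 n).filter (fun i => i ∉ S),
        q ^ (i - 1 + (S.filter (fun r => i < r)).card)
      = ∑ j ∈ Finset.Ico S.card n, q ^ j := by
  intro n
  induction n with
  | zero =>
    intro S hS
    have : S = ∅ := Finset.subset_empty.mp (by simpa using hS)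
    subst this
    simp
  | succ n ih =>
    intro S hS
    have hIcc : Finset.Icc 1 (n + 1) = insert (n + 1) (Finset.Icc 1 n) := by
      ext x; simp [Finset.mem_Icc, Finset.mem_insert]; omega
    by_cases hmem : n + 1 ∈ S
    · -- S contains n+1
      set S' := S.erase (n + 1) with hS'
      have hcard : S.card = S'.card + 1 := by
        rw [hS', Finset.card_erase_of_mem hmem]
        have : 1 ≤ S.card := Finset.card_pos.mpr ⟨_, hmem⟩
        omega
      have hS'sub : S' ⊆ Finset.Icc 1 n := by
        intro x hx
        have hx1 := hS (Finset.erase_subset _ _ hx)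
        have hx2 : x ≠ n + 1 := Finset.ne_of_mem_erase hx
        simp only [Finset.mem_Icc] at hx1 ⊢; omega
      have hfilter : (Finset.Icc 1 (n+1)).filter (fun i => i ∉ S)
          = (Finset.Icc 1 n).filter (fun i => i ∉ S') := by
        ext x
        simp only [Finset.mem_filter, Finset.mem_Icc, hS', Finset.mem_erase]
        constructor
        · rintro ⟨⟨h1, h2⟩, h3⟩
          have : x ≠ n + 1 := by rintro rfl; exact h3 hmem
          exact ⟨⟨h1, by omega⟩, fun h => h3 h.2⟩
        · rintro ⟨⟨h1, h2⟩, h3⟩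
          refine ⟨⟨h1, by omega⟩, fun h => h3 ⟨by omega, h⟩⟩
      have hexp : ∀ x ∈ (Finset.Icc 1 n).filter (fun i => i ∉ S'),
          (S.filter (fun r => x < r)).card = (S'.filter (fun r => x < r)).card + 1 := by
        intro x hx
        simp only [Finset.mem_filter, Finset.mem_Icc] at hx
        have : S.filter (fun r => x < r) = insert (n+1) (S'.filter (fun r => x < r)) := by
          ext y
          simp only [Finset.mem_filter, Finset.mem_insert, hS', Finset.mem_erase]
          constructor
          · rintro ⟨hy, hxy⟩
            by_cases hyn : y = n + 1
            · left; exact hyn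
            · right; exact ⟨⟨hyn, hy⟩, hxy⟩
          · rintro (rfl | ⟨⟨_, hy⟩, hxy⟩)
            · exact ⟨hmem, by omega⟩
            · exact ⟨hy, hxy⟩
        rw [this, Finset.card_insert_of_notMem]
        simp only [Finset.mem_filter, hS', Finset.mem_erase]
        rintro ⟨⟨h, _⟩, _⟩; exact h rfl
      rw [hfilter]
      have : ∑ i ∈ (Finset.Icc 1 n).filter (fun i => i ∉ S'),
          q ^ (i - 1 + (S.filter (fun r => i < r)).card)
          = ∑ i ∈ (Finset.Icc 1 n).filter (fun i => i ∉ S'),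
            q * q ^ (i - 1 + (S'.filter (fun r => i < r)).card) := by
        apply Finset.sum_congr rfl
        intro x hx
        rw [hexp x hx, ← pow_succ']
        ring_nf
      rw [this, ← Finset.mul_sum, ih S' hS'sub, hcard, Finset.mul_sum]
      rw [Finset.sum_Ico_eq_sum_range, Finset.sum_Ico_eq_sum_range]
      rw [show n + 1 - (S'.card + 1) = n - S'.card by omega]
      apply Finset.sum_congr rfl
      intro x _
      rw [show S'.card + 1 + x = S'.card + x + 1 by omega, pow_succ]
      ring
    · -- n+1 ∉ S
      have hSsub : S ⊆ Finset.Icc 1 n := by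
        intro x hx
        have h1 := hS hx
        have : x ≠ n + 1 := by rintro rfl; exact hmem hx
        simp only [Finset.mem_Icc] at h1 ⊢; omega
      have hk : S.card ≤ n := le_trans (Finset.card_le_card hSsub) (by simp)
      have hfilter : (Finset.Icc 1 (n+1)).filter (fun i => i ∉ S)
          = insert (n + 1) ((Finset.Icc 1 n).filter (fun i => i ∉ S)) := by
        rw [hIcc, Finset.filter_insert, if_pos hmem]
      rw [hfilter, Finset.sum_insert (by
        simp only [Finset.mem_filter, Finset.mem_Icc]
        rintro ⟨⟨_, h⟩, _⟩; omega)]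
      have hempty : S.filter (fun r => n + 1 < r) = ∅ := by
        apply Finset.filter_false_of_mem
        intro x hx
        have := hSsub hx
        simp only [Finset.mem_Icc] at this
        omega
      rw [hempty]
      rw [Finset.sum_Ico_succ_top hk]
      rw [ih S hSsub]
      simp only [Finset.card_empty, Nat.add_zero, Nat.add_sub_cancel]
      ring

lemma unsh_fst_inj {i : ℕ} {a b : ℕ × ℕ} (ha1 : 1 ≤ a.1) (ha : a.1 ≠ i)
    (hb1 : 1 ≤ b.1) (hb : b.1 ≠ i) (h : (unsh i a).1 = (unsh i b).1) : a.1 = b.1 := by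
  have h1 : (sh i (unsh i a)).1 = (sh i (unsh i b)).1 := by rw [sh_fst, sh_fst, h]
  rwa [sh_unsh i ha1 ha, sh_unsh i hb1 hb] at h1

lemma unsh_snd (i : ℕ) (c : ℕ × ℕ) : (unsh i c).2 = c.2 := by
  unfold unsh; split <;> rfl

lemma mem_image_sh {i : ℕ} {p' : Finset (ℕ × ℕ)} {c : ℕ × ℕ} :
    sh i c ∈ p'.image (sh i) ↔ c ∈ p' := by
  constructor
  · intro h
    obtain ⟨d, hd, hde⟩ := Finset.mem_image.mp h
    rwa [← sh_inj i hde]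
  · intro h; exact Finset.mem_image_of_mem _ h

lemma placements_shift {lam : ℕ → ℕ} {ℓ i k : ℕ} (hpart : IsPartition lam ℓ)
    (hi : 1 ≤ i) {p' : Finset (ℕ × ℕ)} (hp' : p' ∈ placements (delRow lam i) ℓ k) :
    p'.image (sh i) ∈ placements lam ℓ k := by
  rw [mem_placements] at hp' ⊢
  obtain ⟨hsub, hcard, hatt⟩ := hp'
  refine ⟨?_, ?_, ?_⟩
  · intro c hc
    obtain ⟨d, hd, rfl⟩ := Finset.mem_image.mp hc
    exact (sh_mem_board hpart hi).mp (hsub hd)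
  · rw [Finset.card_image_of_injective _ (sh_inj i), hcard]
  · rintro a ha b hb hab
    obtain ⟨a', ha', rfl⟩ := Finset.mem_image.mp ha
    obtain ⟨b', hb', rfl⟩ := Finset.mem_image.mp hb
    have hne : a' ≠ b' := by rintro rfl; exact hab rfl
    obtain ⟨h1, h2⟩ := hatt a' ha' b' hb' hne
    refine ⟨?_, ?_⟩
    · rw [Ne, sh_fst_eq_iff]; exact h1
    · rw [sh_snd, sh_snd]; exact h2

lemma scount {i : ℕ} {p' : Finset (ℕ × ℕ)} :
    ((p'.image (sh i)).filter (fun c => i < c.1)).card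
      = (p'.filter (fun c => i ≤ c.1)).card := by
  rw [← Finset.card_image_of_injective (p'.filter (fun c => i ≤ c.1)) (sh_inj i)]
  congr 1
  ext c
  simp only [Finset.mem_filter, Finset.mem_image]
  constructor
  · rintro ⟨⟨d, hd, rfl⟩, hlt⟩
    refine ⟨d, ⟨hd, ?_⟩, rfl⟩
    rw [sh_fst] at hlt
    split at hlt <;> omega
  · rintro ⟨d, ⟨hd, hle⟩, rfl⟩
    refine ⟨⟨d, hd, rfl⟩, ?_⟩
    rw [sh_fst]
    split <;> omega

lemma inv_shift {lam : ℕ → ℕ} {ℓ i k : ℕ} (hpart : IsPartition lam ℓ)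
    (hi : 1 ≤ i) {p' : Finset (ℕ × ℕ)} (hp' : p' ∈ placements (delRow lam i) ℓ k) :
    rInv lam ℓ (p'.image (sh i)) + (p'.filter (fun c => i ≤ c.1)).card
      = rInv (delRow lam i) ℓ p' + lam i := by
  set p := p'.image (sh i) with hp_def
  have hp : p ∈ placements lam ℓ k := placements_shift hpart hi hp'
  rw [mem_placements] at hp hp'
  obtain ⟨hsub, hcard, hatt⟩ := hp
  obtain ⟨hsub', hcard', hatt'⟩ := hp'
  have hrow : ∀ c ∈ p, c.1 ≠ i := by
    intro c hc
    obtain ⟨d, hd, rfl⟩ := Finset.mem_image.mp hc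
    exact sh_fst_ne i d
  set A := (board lam ℓ).filter (fun c => c ∉ p ∧
      (∀ r ∈ p, r.1 = c.1 → r.2 < c.2) ∧
      (∀ r ∈ p, r.2 = c.2 → r.1 < c.1)) with hA_def
  set A' := (board (delRow lam i) ℓ).filter (fun c => c ∉ p' ∧
      (∀ r ∈ p', r.1 = c.1 → r.2 < c.2) ∧
      (∀ r ∈ p', r.2 = c.2 → r.1 < c.1)) with hA'_def
  have hinv : rInv lam ℓ p = A.card := rfl
  have hinv' : rInv (delRow lam i) ℓ p' = A'.card := rfl
  -- Part 1: cells not in row i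
  have part1 : (A.filter (fun c => c.1 ≠ i)).card = A'.card := by
    symm
    refine Finset.card_bij' (fun c _ => sh i c) (fun c _ => unsh i c) ?_ ?_ ?_ ?_
    · -- forward maps into
      intro c hc
      rw [hA'_def, Finset.mem_filter] at hc
      obtain ⟨hcb, hcp, hcr, hcc⟩ := hc
      rw [Finset.mem_filter, hA_def, Finset.mem_filter]
      refine ⟨⟨(sh_mem_board hpart hi).mp hcb, ?_, ?_, ?_⟩, sh_fst_ne i c⟩
      · rw [hp_def, mem_image_sh]; exact hcp
      · intro r hr heq
        obtain ⟨d, hd, rfl⟩ := Finset.mem_image.mp hr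
        rw [sh_fst_eq_iff] at heq
        rw [sh_snd, sh_snd]
        exact hcr d hd heq
      · intro r hr heq
        obtain ⟨d, hd, rfl⟩ := Finset.mem_image.mp hr
        rw [sh_snd, sh_snd] at heq
        rw [sh_fst_lt_iff]
        exact hcc d hd heq
    · -- backward maps into
      intro c hc
      rw [Finset.mem_filter, hA_def, Finset.mem_filter] at hc
      obtain ⟨⟨hcb, hcp, hcr, hcc⟩, hcne⟩ := hc
      have hc1 : 1 ≤ c.1 := (mem_board.mp hcb).1
      have hshc : sh i (unsh i c) = c := sh_unsh i hc1 hcne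
      rw [hA'_def, Finset.mem_filter]
      refine ⟨(sh_mem_board hpart hi).mpr (by rw [hshc]; exact hcb), ?_, ?_, ?_⟩
      · intro hmem
        apply hcp
        rw [hp_def, ← hshc]
        exact Finset.mem_image_of_mem _ hmem
      · intro d hd heq
        have := hcr (sh i d) (Finset.mem_image_of_mem _ hd) (by
          rw [← hshc, sh_fst_eq_iff]; exact heq)
        rwa [sh_snd, ← unsh_snd i c] at this
      · intro d hd heq
        have := hcc (sh i d) (Finset.mem_image_of_mem _ hd) (by
          rw [sh_snd, ← unsh_snd i c]; exact heq)
        rw [← hshc, sh_fst_lt_iff] at this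
        exact this
    · intro c _; exact unsh_sh i c
    · intro c hc
      rw [Finset.mem_filter, hA_def, Finset.mem_filter] at hc
      exact sh_unsh i (mem_board.mp hc.1.1).1 hc.2
  -- s-count equality
  have hs : (p.filter (fun c => i < c.1)).card = (p'.filter (fun c => i ≤ c.1)).card :=
    scount
  -- Part 2: cells in row i
  have part2 : (A.filter (fun c => c.1 = i)).card + (p.filter (fun c => i < c.1)).card
      = lam i := by
    by_cases hil : i ≤ ℓ
    · have e1 : (A.filter (fun c => c.1 = i)).card
          = ((Finset.Icc 1 (lam i)).filter
              (fun j => ∀ r ∈ p, r.2 = j → r.1 < i)).card := by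
        refine Finset.card_bij' (fun c _ => c.2) (fun j _ => (i, j)) ?_ ?_ ?_ ?_
        · intro c hc
          rw [Finset.mem_filter, hA_def, Finset.mem_filter] at hc
          obtain ⟨⟨hcb, _, _, hcc⟩, hceq⟩ := hc
          rw [Finset.mem_filter, Finset.mem_Icc]
          obtain ⟨_, _, hc2, hc3⟩ := mem_board.mp hcb
          exact ⟨⟨hc2, by rwa [hceq] at hc3⟩, fun r hr hre => hceq ▸ hcc r hr hre⟩
        · intro j hj
          rw [Finset.mem_filter, Finset.mem_Icc] at hj
          obtain ⟨⟨hj1, hj2⟩, hjp⟩ := hj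
          rw [Finset.mem_filter, hA_def, Finset.mem_filter]
          refine ⟨⟨mem_board.mpr ⟨hi, hil, hj1, hj2⟩, ?_, ?_, ?_⟩, rfl⟩
          · intro hmem; exact hrow _ hmem rfl
          · intro r hr heq; exact absurd heq (hrow r hr)
          · intro r hr heq; exact hjp r hr heq
        · intro c hc
          rw [Finset.mem_filter] at hc
          exact Prod.ext hc.2.symm rfl
        · intro j _; rfl
      have e2 : ((Finset.Icc 1 (lam i)).filter
          (fun j => ¬ ∀ r ∈ p, r.2 = j → r.1 < i)).card
          = (p.filter (fun c => i < c.1)).card := by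
        symm
        refine Finset.card_bij (fun c _ => c.2) ?_ ?_ ?_
        · intro c hc
          rw [Finset.mem_filter] at hc
          obtain ⟨hcp, hci⟩ := hc
          have hcb := hsub hcp
          obtain ⟨h1, h2, h3, h4⟩ := mem_board.mp hcb
          rw [Finset.mem_filter, Finset.mem_Icc]
          refine ⟨⟨h3, le_trans h4 (hpart.1 i c.1 hi (le_of_lt hci))⟩, ?_⟩
          intro hall
          exact absurd (hall c hcp rfl) (by omega)
        · intro a ha b hb heq
          rw [Finset.mem_filter] at ha hb
          by_contra hne
          exact (hatt a ha.1 b hb.1 hne).2 heq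
        · intro j hj
          rw [Finset.mem_filter] at hj
          push_neg at hj
          obtain ⟨hjcc, r, hr, hre, hri⟩ := hj
          have : i < r.1 := lt_of_le_of_ne (by omega) (Ne.symm (hrow r hr))
          exact ⟨r, Finset.mem_filter.mpr ⟨hr, this⟩, hre⟩
      have := Finset.card_filter_add_card_filter_not
        (s := Finset.Icc 1 (lam i)) (p := fun j => ∀ r ∈ p, r.2 = j → r.1 < i)
      rw [Nat.card_Icc] at this
      rw [e1, ← e2]
      omega
    · -- i > ℓ
      have h0 : lam i = 0 := hpart.2.1 i (by omega)
      have hA2 : A.filter (fun c => c.1 = i) = ∅ := by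
        apply Finset.eq_empty_of_forall_notMem
        intro c hc
        rw [Finset.mem_filter, hA_def, Finset.mem_filter] at hc
        have := (mem_board.mp hc.1.1).2.1
        omega
      have hp2 : p.filter (fun c => i < c.1) = ∅ := by
        apply Finset.eq_empty_of_forall_notMem
        intro c hc
        rw [Finset.mem_filter] at hc
        have := (mem_board.mp (hsub hc.1)).2.1
        omega
      rw [hA2, hp2, h0]
      simp
  -- Combine
  have hsplit := Finset.card_filter_add_card_filter_not (s := A)
    (p := fun c => c.1 = i)
  have hne : (A.filter (fun a => ¬ a.1 = i)) = A.filter (fun c => c.1 ≠ i) := rfl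
  rw [hne] at hsplit
  rw [hinv, hinv', ← hs]
  omega

lemma step_lemma {lam : ℕ → ℕ} {ℓ : ℕ} (hpart : IsPartition lam ℓ) {i : ℕ}
    (hi : 1 ≤ i) (k : ℕ) (q : K) :
    ∑ p' ∈ placements (delRow lam i) ℓ k,
        q ^ (i - 1 + lam i) * q ^ rInv (delRow lam i) ℓ p'
      = ∑ p ∈ (placements lam ℓ k).filter (fun p => ∀ c ∈ p, c.1 ≠ i),
          q ^ (i - 1 + rInv lam ℓ p + (p.filter (fun c => i < c.1)).card) := by
  refine Finset.sum_nbij' (fun p => p.image (sh i)) (fun p => p.image (unsh i))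
    ?_ ?_ ?_ ?_ ?_
  · intro p' hp'
    rw [Finset.mem_filter]
    refine ⟨placements_shift hpart hi hp', ?_⟩
    intro c hc
    obtain ⟨d, hd, rfl⟩ := Finset.mem_image.mp hc
    exact sh_fst_ne i d
  · intro p hp
    rw [Finset.mem_filter] at hp
    obtain ⟨hpl, hrow⟩ := hp
    rw [mem_placements] at hpl ⊢
    obtain ⟨hsub, hcard, hatt⟩ := hpl
    have h1 : ∀ c ∈ p, 1 ≤ c.1 := fun c hc => (mem_board.mp (hsub hc)).1
    refine ⟨?_, ?_, ?_⟩
    · intro c hc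
      obtain ⟨d, hd, rfl⟩ := Finset.mem_image.mp hc
      rw [sh_mem_board hpart hi, sh_unsh i (h1 d hd) (hrow d hd)]
      exact hsub hd
    · rw [Finset.card_image_of_injOn, hcard]
      intro a ha b hb hab
      have := congrArg (sh i) hab
      rwa [sh_unsh i (h1 a ha) (hrow a ha), sh_unsh i (h1 b hb) (hrow b hb)] at this
    · rintro a ha b hb hab
      obtain ⟨a', ha', rfl⟩ := Finset.mem_image.mp ha
      obtain ⟨b', hb', rfl⟩ := Finset.mem_image.mp hb
      have hne : a' ≠ b' := by rintro rfl; exact hab rfl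
      obtain ⟨hf, hs2⟩ := hatt a' ha' b' hb' hne
      constructor
      · intro h
        exact hf (unsh_fst_inj (h1 a' ha') (hrow a' ha') (h1 b' hb') (hrow b' hb') h)
      · rw [unsh_snd, unsh_snd]; exact hs2
  · intro p' _
    show (p'.image (sh i)).image (unsh i) = p'
    rw [Finset.image_image]
    rw [show (unsh i ∘ sh i) = id from funext (unsh_sh i), Finset.image_id]
  · intro p hp
    rw [Finset.mem_filter] at hp
    obtain ⟨hpl, hrow⟩ := hp
    rw [mem_placements] at hpl
    show (p.image (unsh i)).image (sh i) = p
    rw [Finset.image_image]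
    have heq : Set.EqOn (sh i ∘ unsh i) id p := fun c hc =>
      sh_unsh i ((mem_board.mp (hpl.1 (Finset.mem_coe.mp hc))).1)
        (hrow c (Finset.mem_coe.mp hc))
    rw [Finset.image_congr heq, Finset.image_id]
  · intro p' hp'
    show _ = q ^ (i - 1 + rInv lam ℓ (p'.image (sh i)) +
      ((p'.image (sh i)).filter (fun c => i < c.1)).card)
    have key := inv_shift hpart hi hp'
    have hsc : ((p'.image (sh i)).filter (fun c => i < c.1)).card
        = (p'.filter (fun c => i ≤ c.1)).card := scount
    rw [← pow_add]
    congr 1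
    omega

lemma rows_spec {lam : ℕ → ℕ} {ℓ k : ℕ} {p : Finset (ℕ × ℕ)}
    (hp : p ∈ placements lam ℓ k) :
    (p.image Prod.fst).card = k ∧ p.image Prod.fst ⊆ Finset.Icc 1 ℓ := by
  rw [mem_placements] at hp
  obtain ⟨hsub, hcard, hatt⟩ := hp
  constructor
  · rw [Finset.card_image_of_injOn, hcard]
    intro a ha b hb hab
    by_contra hne
    exact (hatt a ha b hb hne).1 hab
  · intro x hx
    obtain ⟨c, hc, rfl⟩ := Finset.mem_image.mp hx
    have := mem_board.mp (hsub hc)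
    rw [Finset.mem_Icc]
    exact ⟨this.1, this.2.1⟩

lemma filter_rows_card {lam : ℕ → ℕ} {ℓ k : ℕ} {p : Finset (ℕ × ℕ)}
    (hp : p ∈ placements lam ℓ k) (i : ℕ) :
    (p.filter (fun c => i < c.1)).card
      = ((p.image Prod.fst).filter (fun r => i < r)).card := by
  rw [mem_placements] at hp
  obtain ⟨hsub, hcard, hatt⟩ := hp
  refine Finset.card_bij (fun c _ => c.1) ?_ ?_ ?_
  · intro c hc
    rw [Finset.mem_filter] at hc ⊢
    exact ⟨Finset.mem_image_of_mem _ hc.1, hc.2⟩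
  · intro a ha b hb hab
    rw [Finset.mem_filter] at ha hb
    by_contra hne
    exact (hatt a ha.1 b hb.1 hne).1 hab
  · intro r hr
    rw [Finset.mem_filter] at hr
    obtain ⟨hr1, hr2⟩ := hr
    obtain ⟨c, hc, rfl⟩ := Finset.mem_image.mp hr1
    exact ⟨c, Finset.mem_filter.mpr ⟨hc, hr2⟩, rfl⟩

/-- `∑_{i=1}^{n} q^{i-1+λ_i} R_k(λ∖row_i) = [n]R_k(λ) - [k]R_k(λ)`. -/
theorem stmt8 (q : K) (hq0 : q ≠ 0) (hq1 : ∀ j : ℕ, 0 < j → q ^ j ≠ 1)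
    (lam : ℕ → ℕ) (ℓ n : ℕ) (hpart : IsPartition lam ℓ) (hn : ℓ ≤ n) (k : ℕ) :
    ∑ i ∈ Finset.Icc 1 n, q ^ (i - 1 + lam i) * qRook q (delRow lam i) ℓ k =
      qInt q (n : ℤ) * qRook q lam ℓ k - qInt q (k : ℤ) * qRook q lam ℓ k := by
  -- Step 1: rewrite each summand via the row-removal bijection
  have hstep : ∀ i ∈ Finset.Icc 1 n,
      q ^ (i - 1 + lam i) * qRook q (delRow lam i) ℓ k
        = ∑ p ∈ (placements lam ℓ k).filter (fun p => ∀ c ∈ p, c.1 ≠ i),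
            q ^ (i - 1 + rInv lam ℓ p + (p.filter (fun c => i < c.1)).card) := by
    intro i hi
    rw [Finset.mem_Icc] at hi
    rw [qRook, Finset.mul_sum]
    exact step_lemma hpart hi.1 k q
  rw [Finset.sum_congr rfl hstep]
  -- Step 2: swap the sums
  rw [Finset.sum_congr rfl (fun i _ => Finset.sum_filter
    (fun p => ∀ c ∈ p, c.1 ≠ i)
    (fun p => q ^ (i - 1 + rInv lam ℓ p + (p.filter (fun c => i < c.1)).card)))]
  rw [Finset.sum_comm]
  -- Step 3: evaluate the inner sum for each placement
  have hinner : ∀ p ∈ placements lam ℓ k,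
      (∑ i ∈ Finset.Icc 1 n, if (∀ c ∈ p, c.1 ≠ i) then
          q ^ (i - 1 + rInv lam ℓ p + (p.filter (fun c => i < c.1)).card) else 0)
        = q ^ rInv lam ℓ p * ∑ j ∈ Finset.Ico k n, q ^ j := by
    intro p hp
    obtain ⟨hcardS, hSsub⟩ := rows_spec hp
    set S := p.image Prod.fst with hS_def
    have hSsub' : S ⊆ Finset.Icc 1 n :=
      hSsub.trans (Finset.Icc_subset_Icc_right hn)
    rw [← Finset.sum_filter]
    have hfeq : (Finset.Icc 1 n).filter (fun i => ∀ c ∈ p, c.1 ≠ i)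
        = (Finset.Icc 1 n).filter (fun i => i ∉ S) := by
      apply Finset.filter_congr
      intro i _
      constructor
      · intro h hmem
        obtain ⟨c, hc, hci⟩ := Finset.mem_image.mp hmem
        exact h c hc hci
      · intro h c hc hci
        exact h (hci ▸ Finset.mem_image_of_mem Prod.fst hc)
    rw [hfeq]
    have hterm : ∀ i ∈ (Finset.Icc 1 n).filter (fun i => i ∉ S),
        q ^ (i - 1 + rInv lam ℓ p + (p.filter (fun c => i < c.1)).card)
          = q ^ rInv lam ℓ p * q ^ (i - 1 + (S.filter (fun r => i < r)).card) := by
      intro i _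
      rw [← pow_add, ← filter_rows_card hp i]
      congr 1
      omega
    rw [Finset.sum_congr rfl hterm, ← Finset.mul_sum]
    congr 1
    rw [rowsum q n S hSsub', hcardS]
  rw [Finset.sum_congr rfl hinner, ← Finset.sum_mul]
  rw [show (∑ p ∈ placements lam ℓ k, q ^ rInv lam ℓ p) = qRook q lam ℓ k from rfl]
  -- Step 4: identify the geometric sum with the difference of q-integers
  rw [← sub_mul]
  by_cases hkn : k ≤ n
  · rw [geom_diff hq1 hkn]
    ring
  · have hempty : placements lam ℓ k = ∅ := by
      apply Finset.eq_empty_of_forall_notMem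
      intro p hp
      obtain ⟨hcardS, hSsub⟩ := rows_spec hp
      have := Finset.card_le_card hSsub
      rw [hcardS, Nat.card_Icc] at this
      omega
    have hR : qRook q lam ℓ k = 0 := by
      rw [qRook, hempty, Finset.sum_empty]
    rw [hR, zero_mul, mul_zero]
end
end
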